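/- arXiv:2110.07959 — 6 statements merged into one kernel-verified Lean document; each statement's English description precedes it below -/
import Mathlib

section
/- Let M = [A, B] ∈ ℝ^{n×m} be a block matrix with A ∈ ℝ^{n×m_A}, B ∈ ℝ^{n×m_B}, rank(M) = r, rank(A) = r_A, rank(B) = r_B. For any n×n permutation matrix P with corresponding permutation π_P, rank([A, P B]) ≤ min{n, m, r_A + r_B, r + H(π_P) − C(π_P)}, where H(π_P) is the number of non-fixed points of π_P and C(π_P) is the number of cycles of π_P of length ≥ 2. -/
/-!
Since `P B = B + (P - 1) B`, the matrix `[A, P B]` is `[A, B] + [0, (P - 1) B]`, so by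
subadditivity of rank `rank [A, P B] ≤ r + rank (P - 1)`. For a single cycle of length `k`, the
`k` nonzero columns of `P - 1` sum to zero, so `rank (P - 1) ≤ k - 1`; for disjoint permutations
`P_{στ} - 1 = (P_σ - 1) + (P_τ - 1)`, and summing over the cycle decomposition gives
`rank (P - 1) ≤ H(π) - C(π)`. The bound `r_A + r_B` is subadditivity of rank over column blocks.
-/

open Matrix

/-- Hamming weight of a permutation: number of non-fixed points. -/
def hammingWeight {n : ℕ} (σ : Equiv.Perm (Fin n)) : ℕ := σ.support.card

/-- Cycle number: number of cycles of length ≥ 2 in the cycle decomposition. -/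
def cycleNumber {n : ℕ} (σ : Equiv.Perm (Fin n)) : ℕ := Multiset.card σ.cycleType

open Equiv Finset

namespace Matrix

variable {m n n₁ n₂ K : Type*} [Fintype n] [Fintype n₁] [Fintype n₂] [Field K]

theorem rank_add_le (A B : Matrix m n K) : (A + B).rank ≤ A.rank + B.rank := by
  refine (Submodule.finrank_mono ?_).trans (Submodule.finrank_add_le_finrank_add_finrank _ _)
  rintro _ ⟨v, rfl⟩
  rw [mulVecLin_apply, add_mulVec]
  exact Submodule.add_mem_sup ⟨v, rfl⟩ ⟨v, rfl⟩

theorem rank_fromCols_le (A : Matrix m n₁ K) (B : Matrix m n₂ K) :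
    (fromCols A B).rank ≤ A.rank + B.rank := by
  refine (Submodule.finrank_mono ?_).trans (Submodule.finrank_add_le_finrank_add_finrank _ _)
  rintro _ ⟨v, rfl⟩
  rw [mulVecLin_apply, fromCols_mulVec]
  exact Submodule.add_mem_sup ⟨_, rfl⟩ ⟨_, rfl⟩

theorem rank_fromCols_le_rank_fromCols_add_rank_sub (A : Matrix m n₁ K) (B C : Matrix m n₂ K) :
    (fromCols A C).rank ≤ (fromCols A B).rank + (C - B).rank := by
  have hsplit : fromCols A C = fromCols A B + fromCols 0 (C - B) := by
    ext i (j | j) <;> simp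
  calc (fromCols A C).rank
      ≤ (fromCols A B).rank + (fromCols (0 : Matrix m n₁ K) (C - B)).rank :=
        hsplit ▸ rank_add_le _ _
    _ ≤ (fromCols A B).rank + (C - B).rank := by
        grw [rank_fromCols_le (0 : Matrix m n₁ K), rank_zero, zero_add]

theorem rank_le_card_sub_one_of_sum_col_eq_zero (M : Matrix m n K) (s : Finset n)
    (hzero : ∀ j ∉ s, M.col j = 0) (hsum : ∑ j ∈ s, M.col j = 0) : M.rank ≤ #s - 1 := by
  classical
  rcases s.eq_empty_or_nonempty with rfl | ⟨j₀, hj₀⟩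
  · have : M = 0 := ext fun i j => congrFun (hzero j (notMem_empty j)) i
    simp [this]
  have hspan : Submodule.span K (Set.range M.col) ≤
      Submodule.span K ((s.erase j₀).image M.col : Set (m → K)) := by
    refine Submodule.span_le.2 ?_
    rintro _ ⟨j, rfl⟩
    by_cases hj : j ∈ s.erase j₀
    · exact Submodule.subset_span (mem_image_of_mem _ hj)
    by_cases hjs : j ∈ s
    · obtain rfl : j = j₀ := by simpa [hjs] using hj
      rw [← add_sum_erase s _ hj₀, add_eq_zero_iff_eq_neg] at hsum
      rw [hsum]
      exact neg_mem <| Submodule.sum_mem _ fun k hk =>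
        Submodule.subset_span (mem_image_of_mem _ hk)
    · rw [hzero j hjs]
      exact Submodule.zero_mem _
  calc M.rank ≤ #((s.erase j₀).image M.col) := by
        rw [rank_eq_finrank_span_cols]
        exact (Submodule.finrank_mono hspan).trans (finrank_span_finset_le_card _)
    _ ≤ #(s.erase j₀) := card_image_le
    _ = #s - 1 := card_erase_of_mem hj₀

end Matrix

namespace Equiv.Perm

variable {n : Type*} [DecidableEq n]

theorem Disjoint.permMatrix_mul_sub_one {R : Type*} [AddGroupWithOne R] {σ τ : Perm n}
    (h : σ.Disjoint τ) :
    (σ * τ).permMatrix R - 1 = (σ.permMatrix R - 1) + (τ.permMatrix R - 1) := by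
  ext i j
  have hστ : σ (τ i) = τ i ∨ τ i = i := (h (τ i)).imp_right fun h' => τ.injective h'
  simp only [Matrix.sub_apply, Matrix.add_apply, PEquiv.toMatrix_apply, toPEquiv_apply,
    Option.mem_def, Option.some.injEq, mul_apply, Matrix.one_apply]
  rcases h i with hσ | hτ
  · rcases hστ with h' | h' <;> simp [hσ, h']
  · simp [hτ]

variable [Fintype n] {K : Type*} [Field K]

theorem rank_permMatrix_sub_one_le_card_support_sub_one (σ : Perm n) :
    (σ.permMatrix K - 1).rank ≤ #σ.support - 1 := by
  have hcol : ∀ j, (σ.permMatrix K - 1).col j = Pi.single (σ.symm j) 1 - Pi.single j 1 := by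
    intro j
    ext i
    simp [col, Matrix.one_apply, PEquiv.toMatrix_apply, Pi.single_apply, eq_comm,
      Equiv.eq_symm_apply]
  apply rank_le_card_sub_one_of_sum_col_eq_zero
  · intro j hj
    rw [hcol, σ.symm_apply_eq.2 (notMem_support.1 hj).symm, sub_self]
  · simp only [hcol, sum_sub_distrib]
    exact sub_eq_zero.2 (sum_comp σ⁻¹ _ (fun j => Pi.single j (1 : K))
      fun j hj => support_inv σ ▸ mem_support.2 hj)

/-- Stated additively so that the induction over disjoint cycles avoids truncated subtraction. -/
theorem rank_permMatrix_sub_one_add_card_cycleType_le (σ : Perm n) :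
    (σ.permMatrix K - 1).rank + Multiset.card σ.cycleType ≤ #σ.support := by
  induction σ using cycle_induction_on with
  | base_one => simp
  | base_cycles σ hσ =>
    have := rank_permMatrix_sub_one_le_card_support_sub_one (K := K) σ
    have := hσ.two_le_card_support
    rw [hσ.cycleType, Multiset.card_singleton]
    omega
  | induction_disjoint σ τ hd _ hσ hτ =>
    rw [hd.permMatrix_mul_sub_one, hd.cycleType_mul, Multiset.card_add, hd.card_support_mul]
    have := rank_add_le (σ.permMatrix K - 1) (τ.permMatrix K - 1)
    omega

end Equiv.Perm

/-- For `M = [A, B]` with `rank M = r`, `rank A = r_A`, `rank B = r_B`, and any row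
permutation `P` (with permutation `π_P`), we have
`rank [A, P B] ≤ min {n, m, r_A + r_B, r + H(π_P) − C(π_P)}`. -/
theorem rank_perm_concat_le {n mA mB m r rA rB : ℕ}
    (A : Matrix (Fin n) (Fin mA) ℝ) (B : Matrix (Fin n) (Fin mB) ℝ)
    (hm : m = mA + mB)
    (hr : (fromCols A B).rank = r) (hrA : A.rank = rA) (hrB : B.rank = rB)
    (σ : Equiv.Perm (Fin n)) :
    (fromCols A (B.submatrix σ id)).rank ≤
      min (min n m) (min (rA + rB) (r + (hammingWeight σ - cycleNumber σ))) := by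
  have hperm : B.submatrix σ id - B = (σ.permMatrix ℝ - 1) * B := by
    rw [Matrix.sub_mul, Matrix.one_mul, PEquiv.toMatrix_toPEquiv_mul]
  have hH := σ.rank_permMatrix_sub_one_add_card_cycleType_le (K := ℝ)
  refine le_min (le_min ?_ ?_) (le_min ?_ ?_)
  · simpa using rank_le_card_height (fromCols A (B.submatrix σ id))
  · simpa [hm] using rank_le_card_width (fromCols A (B.submatrix σ id))
  · calc _ ≤ A.rank + (B.submatrix σ (Equiv.refl _)).rank := rank_fromCols_le _ _
      _ = rA + rB := by rw [rank_submatrix, hrA, hrB]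
  · calc _ ≤ (fromCols A B).rank + (B.submatrix σ id - B).rank :=
          rank_fromCols_le_rank_fromCols_add_rank_sub _ _ _
      _ ≤ r + (σ.permMatrix ℝ - 1).rank := by rw [hr, hperm]; grw [rank_mul_le_left]
      _ ≤ r + (hammingWeight σ - cycleNumber σ) := by unfold hammingWeight cycleNumber; omega
end

section
/- For any block matrix [A, B] with rank(A) = r_A and any permutation matrix P, rank([A, P B]) ≤ rank([A, B]) + rank([Pa_1 − a_1, ..., Pa_{r_A} − a_{r_A}]) where a_1, ..., a_{r_A} is any basis of the column space of A extended to a basis of the column space of [A, B]. -/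
/-!
Let `P x = x ∘ σ`. The columns of `[A, P B]` are the columns of `A`, which lie in the span of the
`a t`, and the vectors `P b` with `b` a column of `B`. Since `a t = P (a t) - (P a t - a t)`, all of
them lie in `P (col [A, B]) + span {P a t - a t}`, whose dimension is at most
`rank [A, B] + rank [P a_1 - a_1, …]`.
-/

open Matrix Submodule Module Set

theorem Submodule.span_range_le_map_sup_span_range_sub {R V ι : Type*} [Ring R] [AddCommGroup V]
    [Module R V] (f : V →ₗ[R] V) {a : ι → V} {S : Submodule R V} (ha : ∀ t, a t ∈ S) :
    span R (range a) ≤ S.map f ⊔ span R (range fun t => f (a t) - a t) := by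
  refine span_le.mpr (range_subset_iff.mpr fun t => ?_)
  rw [SetLike.mem_coe, ← sub_sub_cancel (f (a t)) (a t)]
  exact sub_mem (mem_sup_left (mem_map_of_mem (ha t))) (mem_sup_right (subset_span ⟨t, rfl⟩))

namespace Matrix

variable {R m m' n₁ n₂ : Type*}

theorem span_range_transpose_fromCols [Semiring R] (A₁ : Matrix m n₁ R)
    (A₂ : Matrix m n₂ R) :
    span R (range (fromCols A₁ A₂)ᵀ) = span R (range A₁ᵀ) ⊔ span R (range A₂ᵀ) := by
  rw [transpose_fromCols, ← span_union]
  exact congrArg (span R) (Sum.elim_range _ _)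

theorem span_range_transpose_submatrix_id [Semiring R] (B : Matrix m n₂ R) (g : m' → m) :
    span R (range (B.submatrix g id)ᵀ) = (span R (range Bᵀ)).map (LinearMap.funLeft R R g) := by
  rw [map_span]
  exact congrArg (span R) (range_comp (LinearMap.funLeft R R g) Bᵀ)

theorem rank_fromCols_submatrix_le {ι : Type*} [Field R] [Fintype m] [Fintype n₁] [Fintype n₂]
    [Fintype ι] (A : Matrix m n₁ R) (B : Matrix m n₂ R) (g : m → m) (a : ι → m → R)
    (ha : span R (range a) = span R (range Aᵀ)) :
    (fromCols A (B.submatrix g id)).rank ≤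
      (fromCols A B).rank + (of fun i j => a j (g i) - a j i).rank := by
  let f := LinearMap.funLeft R R g
  let S := span R (range (fromCols A B)ᵀ)
  let D := span R (range fun t => f (a t) - a t)
  have ha_S : ∀ t, a t ∈ S := fun t => by
    have : a t ∈ span R (range Aᵀ) := ha ▸ subset_span ⟨t, rfl⟩
    exact (span_range_transpose_fromCols A B).ge (mem_sup_left this)
  have hcols : span R (range (fromCols A (B.submatrix g id))ᵀ) ≤ S.map f ⊔ D := by
    rw [span_range_transpose_fromCols, span_range_transpose_submatrix_id]
    refine sup_le ?_ ?_
    · exact ha.ge.trans (span_range_le_map_sup_span_range_sub f ha_S)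
    · exact le_sup_of_le_left
        (map_mono (le_sup_right.trans (span_range_transpose_fromCols A B).ge))
  rw [rank_eq_finrank_span_cols, rank_eq_finrank_span_cols, rank_eq_finrank_span_cols]
  calc finrank R (span R (range (fromCols A (B.submatrix g id))ᵀ))
      ≤ finrank R ↥(S.map f ⊔ D) := Submodule.finrank_mono hcols
    _ ≤ finrank R (S.map f) + finrank R D := finrank_add_le_finrank_add_finrank _ _
    _ ≤ finrank R S + finrank R D := by gcongr; exact finrank_map_le f S

end Matrix

theorem rank_perm_concat_le_rank_add_rank_diff_general {n mA mB rA : ℕ}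
    (A : Matrix (Fin n) (Fin mA) ℝ) (B : Matrix (Fin n) (Fin mB) ℝ)
    (σ : Equiv.Perm (Fin n))
    (a : Fin rA → (Fin n → ℝ))
    (ha_span : Submodule.span ℝ (Set.range a) =
      Submodule.span ℝ (Set.range fun j => fun i => A i j)) :
    (fromCols A (B.submatrix σ id)).rank ≤
      (fromCols A B).rank +
        (Matrix.of fun i j => a j (σ i) - a j i : Matrix (Fin n) (Fin rA) ℝ).rank :=
  rank_fromCols_submatrix_le A B σ a ha_span

/-- For any block matrix `[A, B]`, any permutation matrix `P`, and any basis
`a_1, ..., a_{r_A}` of the column space of `A` extended (by `b_1, ..., b_k`) to a basis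
of the column space of `[A, B]`, we have
`rank [A, P B] ≤ rank [A, B] + rank [P a_1 − a_1, ..., P a_{r_A} − a_{r_A}]`. -/
theorem rank_perm_concat_le_rank_add_rank_diff {n mA mB rA k : ℕ}
    (A : Matrix (Fin n) (Fin mA) ℝ) (B : Matrix (Fin n) (Fin mB) ℝ)
    (σ : Equiv.Perm (Fin n))
    (a : Fin rA → (Fin n → ℝ)) (b : Fin k → (Fin n → ℝ))
    (ha_span : Submodule.span ℝ (Set.range a) =
      Submodule.span ℝ (Set.range fun j => fun i => A i j))
    (hab_indep : LinearIndependent ℝ (Sum.elim a b))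
    (hab_span : Submodule.span ℝ (Set.range (Sum.elim a b)) =
      Submodule.span ℝ (Set.range fun j => fun i => (fromCols A B) i j)) :
    (fromCols A (B.submatrix σ id)).rank ≤
      (fromCols A B).rank +
        (Matrix.of fun i j => a j (σ i) - a j i : Matrix (Fin n) (Fin rA) ℝ).rank :=
  rank_perm_concat_le_rank_add_rank_diff_general A B σ a ha_span
end

section
/- Let P be an n×n permutation matrix with permutation π_P having non-fixed-point count H(π_P) and cycle count C(π_P) (cycles of length ≥ 2). Then for any vectors a_1, ..., a_k ∈ ℝ^n, rank([P a_1 − a_1, ..., P a_k − a_k]) ≤ H(π_P) − C(π_P). -/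
open Matrix

/-!
The columns `P a_j - a_j` lie in the range of `P - 1`. The kernel of `P - 1` contains the
indicator functions of the orbits of `π_P`, which are linearly independent because the orbits are
disjoint and nonempty. There are `n - H` one-point orbits and `C` cycles, so
`rank (P - 1) ≤ n - (n - H + C) = H - C`.
-/

open Equiv Function Finset

theorem linearIndependent_indicator_one_of_pairwise_disjoint {ι α R : Type*} [Ring R]
    {s : ι → Set α}
    (hne : ∀ i, (s i).Nonempty) (hdisj : Pairwise (Disjoint on s)) :
    LinearIndependent R fun i => (s i).indicator (1 : α → R) := by
  classical
  rw [linearIndependent_iff']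
  intro t g hsum i hi
  obtain ⟨x, hx⟩ := hne i
  have hx_only : ∀ j ≠ i, x ∉ s j := fun j hji hxj =>
    Set.disjoint_left.mp (hdisj hji) hxj hx
  have := congrFun hsum x
  simp only [Finset.sum_apply, Pi.smul_apply, smul_eq_mul, Pi.zero_apply] at this
  rwa [Finset.sum_eq_single i (fun j _ hji => by simp [hx_only j hji]) (absurd hi),
    Set.indicator_of_mem hx, Pi.one_apply, mul_one] at this

namespace Equiv.Perm

variable {α : Type*} (R : Type*) [CommRing R]

/-- `x ↦ x ∘ σ - x`; in matrix form this is `P - 1` for the permutation matrix `P` of `σ`. -/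
def funLeftSubId (σ : Perm α) : (α → R) →ₗ[R] (α → R) :=
  LinearMap.funLeft R R σ - LinearMap.id

variable {R}

theorem indicator_one_mem_ker_funLeftSubId {σ : Perm α} {s : Set α} (hs : σ ⁻¹' s = s) :
    s.indicator (1 : α → R) ∈ LinearMap.ker (funLeftSubId R σ) := by
  rw [LinearMap.mem_ker, funLeftSubId, LinearMap.sub_apply, sub_eq_zero]
  ext x
  conv_rhs => rw [← hs]
  exact (Set.indicator_comp_right (g := (1 : α → R)) σ).symm

variable [Fintype α] [DecidableEq α]

def orbitSet (σ : Perm α) : fixedPoints σ ⊕ σ.cycleFactorsFinset → Set α :=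
  Sum.elim (fun x => {x.1}) (fun c => c.1.support)

theorem orbitSet_nonempty (σ : Perm α) (i : fixedPoints σ ⊕ σ.cycleFactorsFinset) :
    (σ.orbitSet i).Nonempty := by
  rcases i with x | c
  · exact Set.singleton_nonempty _
  · exact Finset.coe_nonempty.mpr (mem_cycleFactorsFinset_iff.mp c.2).1.nonempty_support

theorem pairwise_disjoint_orbitSet (σ : Perm α) : Pairwise (_root_.Disjoint on σ.orbitSet) := by
  have fixed_notMem (x : fixedPoints σ) (c : σ.cycleFactorsFinset) : x.1 ∉ c.1.support :=
    fun hx => mem_support.mp (mem_cycleFactorsFinset_support_le c.2 hx) x.2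
  rintro (x | c) (y | d) hne <;> simp only [onFun, orbitSet, Sum.elim_inl, Sum.elim_inr]
  · exact Set.disjoint_singleton.mpr fun h => hne (congrArg Sum.inl (Subtype.ext h))
  · exact Set.disjoint_singleton_left.mpr (fixed_notMem x d)
  · exact Set.disjoint_singleton_right.mpr (fixed_notMem y c)
  · refine Finset.disjoint_coe.mpr <| Disjoint.disjoint_support <|
      σ.cycleFactorsFinset_pairwise_disjoint c.2 d.2 fun h => ?_
    exact hne (congrArg Sum.inr (Subtype.ext h))

theorem preimage_orbitSet (σ : Perm α) (i : fixedPoints σ ⊕ σ.cycleFactorsFinset) :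
    σ ⁻¹' σ.orbitSet i = σ.orbitSet i := by
  ext x
  rcases i with y | c
  · simpa [orbitSet] using (σ.injective.eq_iff' y.2 : σ x = y ↔ x = y)
  · simpa [orbitSet] using zpow_apply_mem_support_of_mem_cycleFactorsFinset_iff (m := 1) (c := c)

theorem card_fixedPoints_sum_cycleFactorsFinset (σ : Perm α) :
    Fintype.card (fixedPoints σ ⊕ σ.cycleFactorsFinset) =
      Fintype.card α - #σ.support + Multiset.card σ.cycleType := by
  rw [Fintype.card_sum, card_fixedPoints, sum_cycleType, cycleType_def, Multiset.card_map,
    Fintype.card_coe]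
  rfl

theorem finrank_range_funLeftSubId_le {K : Type*} [Field K] (σ : Perm α) :
    Module.finrank K (LinearMap.range (funLeftSubId K σ)) ≤
      #σ.support - Multiset.card σ.cycleType := by
  have hli := linearIndependent_indicator_one_of_pairwise_disjoint (R := K)
    σ.orbitSet_nonempty σ.pairwise_disjoint_orbitSet
  have hker : Fintype.card (fixedPoints σ ⊕ σ.cycleFactorsFinset) ≤
      Module.finrank K (LinearMap.ker (funLeftSubId K σ)) := by
    rw [← finrank_span_eq_card hli]
    exact Submodule.finrank_mono <| Submodule.span_le.mpr <| Set.range_subset_iff.mpr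
      fun i => indicator_one_mem_ker_funLeftSubId (σ.preimage_orbitSet i)
  have hrank_nullity := LinearMap.finrank_range_add_finrank_ker (funLeftSubId K σ)
  rw [card_fixedPoints_sum_cycleFactorsFinset] at hker
  rw [Module.finrank_fintype_fun_eq_card] at hrank_nullity
  have hsupport := σ.support.card_le_univ
  omega

end Equiv.Perm

/-- For a permutation matrix `P` (with permutation `π_P`) and any vectors
`a_1, ..., a_k ∈ ℝ^n`, `rank [P a_1 − a_1, ..., P a_k − a_k] ≤ H(π_P) − C(π_P)`. -/
theorem rank_perm_diff_le {n k : ℕ} (σ : Equiv.Perm (Fin n)) (a : Fin k → (Fin n → ℝ)) :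
    (Matrix.of fun i j => a j (σ i) - a j i : Matrix (Fin n) (Fin k) ℝ).rank ≤
      hammingWeight σ - cycleNumber σ := by
  rw [Matrix.rank_eq_finrank_span_cols]
  refine (Submodule.finrank_mono ?_).trans σ.finrank_range_funLeftSubId_le
  rw [Submodule.span_le, Set.range_subset_iff]
  exact fun j => ⟨a j, rfl⟩
end

section
/- For matrices A ∈ ℝ^{n×m_A}, B ∈ ℝ^{n×m_B} and any n×n permutation matrix P, one has −Z/N ≤ (‖[A, P B]‖_* − ‖[A, B]‖_*)/‖[A, B]‖_* ≤ Z/N, where N = max{‖A‖_*, ‖B‖_*}, Z = min{‖A‖_*, ‖B‖_*}, and ‖·‖_* denotes the nuclear norm. -/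
/-!
With the spectral (ℓ²-operator) norm on matrices, the nuclear norm is its dual norm:
`‖X‖_* = max {tr (Wᴴ X) : ‖W‖ ≤ 1}`, the maximum being attained at `W = X U diag(σ⁻¹) Uᴴ`,
where `U` diagonalises `Xᴴ X` and `σ` are the singular values. Right multiplication by a
contraction can therefore only decrease `‖·‖_*`; since `C` and `D` arise from `[C, D]` in this
way, and `[C, D] = C E₁ᴴ + D E₂ᴴ` for the isometries `E₁ = [1; 0]`, `E₂ = [0; 1]`, we get
`max (‖C‖_*, ‖D‖_*) ≤ ‖[C, D]‖_* ≤ ‖C‖_* + ‖D‖_*`. Permuting the rows of `B` leaves `Bᴴ B`,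
hence `‖B‖_*`, unchanged, so `‖[A, B]‖_*` and `‖[A, P B]‖_*` both lie in `[N, N + Z]`: they
differ by at most `Z`, and the denominator is at least `N`.
-/

open Matrix

/-- The nuclear norm of a real matrix: the sum of its singular values, i.e. the sum of the
square roots of the eigenvalues of `Aᵀ A`. -/
noncomputable def nuclearNorm {m n : Type*} [Fintype m] [Fintype n] [DecidableEq n]
    (A : Matrix m n ℝ) : ℝ :=
  ∑ i, Real.sqrt ((Matrix.isHermitian_conjTranspose_mul_self A).eigenvalues i)

open scoped Matrix.Norms.L2Operator InnerProductSpace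

namespace Matrix

variable {𝕜 m n p q : Type*} [RCLike 𝕜] [Fintype m] [Fintype n] [DecidableEq n]

theorem l2_opNorm_le_one_of_l2_opNorm_conjTranspose_mul_self_le_one {A : Matrix m n 𝕜}
    (h : ‖Aᴴ * A‖ ≤ 1) : ‖A‖ ≤ 1 := by
  rw [l2_opNorm_conjTranspose_mul_self] at h
  nlinarith [norm_nonneg A]

theorem l2_opNorm_one_le : ‖(1 : Matrix n n 𝕜)‖ ≤ 1 := by
  rw [← diagonal_one, l2_opNorm_diagonal]
  exact pi_norm_le_iff_of_nonneg zero_le_one |>.mpr fun _ => by simp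

theorem l2_opNorm_le_one_of_conjTranspose_mul_self_eq_one {A : Matrix m n 𝕜}
    (h : Aᴴ * A = 1) : ‖A‖ ≤ 1 :=
  l2_opNorm_le_one_of_l2_opNorm_conjTranspose_mul_self_le_one (h ▸ l2_opNorm_one_le)

theorem l2_opNorm_fromRows_one_zero_le [Fintype p] [Fintype q] [DecidableEq p] :
    ‖(fromRows 1 0 : Matrix (p ⊕ q) p 𝕜)‖ ≤ 1 :=
  l2_opNorm_le_one_of_conjTranspose_mul_self_eq_one <| by
    rw [conjTranspose_fromRows_eq_fromCols_conjTranspose, fromCols_mul_fromRows]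
    simp

theorem l2_opNorm_fromRows_zero_one_le [Fintype p] [Fintype q] [DecidableEq q] :
    ‖(fromRows 0 1 : Matrix (p ⊕ q) q 𝕜)‖ ≤ 1 :=
  l2_opNorm_le_one_of_conjTranspose_mul_self_eq_one <| by
    rw [conjTranspose_fromRows_eq_fromCols_conjTranspose, fromCols_mul_fromRows]
    simp

theorem trace_eq_sum_inner_toEuclideanLin (M : Matrix n n 𝕜)
    (b : OrthonormalBasis n 𝕜 (EuclideanSpace 𝕜 n)) :
    M.trace = ∑ j, ⟪b j, toEuclideanLin M (b j)⟫_𝕜 := by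
  rw [← LinearMap.trace_eq_sum_inner, toEuclideanLin_eq_toLin_orthonormal, trace_toLin_eq]

end Matrix

section NuclearNorm

variable {m m' n : Type*} [Fintype m] [Fintype m'] [Fintype n] [DecidableEq n]

theorem nuclearNorm_eq_of_conjTranspose_mul_self_eq {X : Matrix m n ℝ} {Y : Matrix m' n ℝ}
    (h : Xᴴ * X = Yᴴ * Y) : nuclearNorm X = nuclearNorm Y := by
  have eigenvalues_congr : ∀ {M N : Matrix n n ℝ} (hM : M.IsHermitian) (hN : N.IsHermitian),
      M = N → hM.eigenvalues = hN.eigenvalues := by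
    rintro M _ hM hN rfl
    rfl
  rw [nuclearNorm, nuclearNorm, eigenvalues_congr _ _ h]

theorem nuclearNorm_submatrix_equiv_left (X : Matrix m n ℝ) (e : m' ≃ m) :
    nuclearNorm (X.submatrix e id) = nuclearNorm X :=
  nuclearNorm_eq_of_conjTranspose_mul_self_eq <| by
    rw [conjTranspose_submatrix, submatrix_mul_equiv _ _ _ e, submatrix_id_id]

theorem norm_toEuclideanLin_eigenvectorBasis (X : Matrix m n ℝ) (j : n) :
    ‖toEuclideanLin X ((isHermitian_conjTranspose_mul_self X).eigenvectorBasis j)‖ =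
      √((isHermitian_conjTranspose_mul_self X).eigenvalues j) := by
  classical
  set hH := isHermitian_conjTranspose_mul_self X
  set b := hH.eigenvectorBasis
  have hsq : ‖toEuclideanLin X (b j)‖ ^ 2 = hH.eigenvalues j := by
    rw [← real_inner_self_eq_norm_sq, ← LinearMap.adjoint_inner_right,
      ← toEuclideanLin_conjTranspose_eq_adjoint]
    simp only [toLpLin_apply, mulVec_mulVec]
    rw [hH.mulVec_eigenvectorBasis j, WithLp.toLp_smul, WithLp.toLp_ofLp,
      real_inner_smul_right, real_inner_self_eq_norm_sq, b.norm_eq_one, one_pow, mul_one]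
  rw [← hsq, Real.sqrt_sq (norm_nonneg _)]

theorem trace_conjTranspose_mul_le_nuclearNorm {W X : Matrix m n ℝ} (hW : ‖W‖ ≤ 1) :
    (Wᴴ * X).trace ≤ nuclearNorm X := by
  classical
  set b := (isHermitian_conjTranspose_mul_self X).eigenvectorBasis
  rw [trace_eq_sum_inner_toEuclideanLin _ b, nuclearNorm]
  refine Finset.sum_le_sum fun j _ => ?_
  calc ⟪b j, toEuclideanLin (Wᴴ * X) (b j)⟫_ℝ
      = ⟪toEuclideanLin W (b j), toEuclideanLin X (b j)⟫_ℝ := by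
        rw [← LinearMap.adjoint_inner_right, ← toEuclideanLin_conjTranspose_eq_adjoint]
        simp only [toLpLin_apply, mulVec_mulVec]
    _ ≤ ‖toEuclideanLin W (b j)‖ * ‖toEuclideanLin X (b j)‖ := real_inner_le_norm _ _
    _ ≤ 1 * ‖toEuclideanLin X (b j)‖ := by
        gcongr
        calc ‖toEuclideanLin W (b j)‖ ≤ ‖W‖ * ‖b j‖ := W.l2_opNorm_mulVec _
          _ ≤ 1 := by rwa [b.norm_eq_one, mul_one]
    _ = _ := by rw [one_mul, norm_toEuclideanLin_eigenvectorBasis]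

theorem exists_l2_opNorm_le_one_trace_eq_nuclearNorm (X : Matrix m n ℝ) :
    ∃ W : Matrix m n ℝ, ‖W‖ ≤ 1 ∧ (Wᴴ * X).trace = nuclearNorm X := by
  set hH := isHermitian_conjTranspose_mul_self X
  set U : Matrix n n ℝ := ↑hH.eigenvectorUnitary
  set μ := hH.eigenvalues
  -- `(√0)⁻¹ = 0`, so `g` inverts the nonzero singular values and vanishes elsewhere.
  set g : n → ℝ := fun i => (√(μ i))⁻¹
  have hdiag : Uᴴ * (Xᴴ * X) * U = diagonal μ := by
    have := hH.conjStarAlgAut_star_eigenvectorUnitary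
    rwa [Unitary.conjStarAlgAut_star_apply, RCLike.ofReal_real_eq_id, Function.id_comp] at this
  have hU : U * Uᴴ = 1 := Unitary.mul_star_self_of_mem hH.eigenvectorUnitary.2
  set V := X * U * diagonal g
  have hV : Vᴴ * V = diagonal fun i => g i * μ i * g i := by
    rw [← diagonal_mul_diagonal, ← diagonal_mul_diagonal, ← hdiag]
    simp only [V, conjTranspose_mul, diagonal_conjTranspose, star_trivial, Matrix.mul_assoc]
  have hV_norm : ‖V‖ ≤ 1 := by
    refine l2_opNorm_le_one_of_l2_opNorm_conjTranspose_mul_self_le_one ?_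
    rw [hV, l2_opNorm_diagonal]
    refine pi_norm_le_iff_of_nonneg zero_le_one |>.mpr fun i => ?_
    rw [inv_mul_eq_div, Real.div_sqrt, Real.norm_of_nonneg (by positivity)]
    exact mul_inv_le_one
  refine ⟨V * Uᴴ, ?_, ?_⟩
  · calc ‖V * Uᴴ‖ ≤ ‖V‖ * ‖Uᴴ‖ := l2_opNorm_mul _ _
      _ ≤ 1 * 1 := by
        gcongr
        exact l2_opNorm_le_one_of_conjTranspose_mul_self_eq_one (by simpa using hU)
      _ = 1 := one_mul 1
  · calc ((V * Uᴴ)ᴴ * X).trace = (diagonal g * (Uᴴ * (Xᴴ * X) * U)).trace := by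
          rw [conjTranspose_mul, conjTranspose_conjTranspose, Matrix.mul_assoc, trace_mul_comm]
          simp only [V, conjTranspose_mul, diagonal_conjTranspose, star_trivial, Matrix.mul_assoc]
      _ = ∑ i, g i * μ i := by rw [hdiag, diagonal_mul_diagonal, trace_diagonal]
      _ = nuclearNorm X := Finset.sum_congr rfl fun i _ => by rw [inv_mul_eq_div, Real.div_sqrt]

theorem nuclearNorm_add_le (X Y : Matrix m n ℝ) :
    nuclearNorm (X + Y) ≤ nuclearNorm X + nuclearNorm Y := by
  obtain ⟨W, hW, hW_trace⟩ := exists_l2_opNorm_le_one_trace_eq_nuclearNorm (X + Y)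
  rw [← hW_trace, Matrix.mul_add, trace_add]
  exact add_le_add (trace_conjTranspose_mul_le_nuclearNorm hW)
    (trace_conjTranspose_mul_le_nuclearNorm hW)

theorem nuclearNorm_mul_le_of_l2_opNorm_le_one {p : Type*} [Fintype p] [DecidableEq p]
    (X : Matrix m n ℝ) {E : Matrix n p ℝ} (hE : ‖E‖ ≤ 1) :
    nuclearNorm (X * E) ≤ nuclearNorm X := by
  obtain ⟨W, hW, hW_trace⟩ := exists_l2_opNorm_le_one_trace_eq_nuclearNorm (X * E)
  have hWE : ‖W * Eᴴ‖ ≤ 1 := calc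
    ‖W * Eᴴ‖ ≤ ‖W‖ * ‖Eᴴ‖ := l2_opNorm_mul _ _
    _ ≤ 1 * 1 := by rw [l2_opNorm_conjTranspose]; gcongr
    _ = 1 := one_mul 1
  calc nuclearNorm (X * E) = ((W * Eᴴ)ᴴ * X).trace := by
        rw [← hW_trace, ← Matrix.mul_assoc, trace_mul_comm, conjTranspose_mul,
          conjTranspose_conjTranspose, Matrix.mul_assoc]
    _ ≤ nuclearNorm X := trace_conjTranspose_mul_le_nuclearNorm hWE

variable {p q : Type*} [Fintype p] [Fintype q] [DecidableEq p] [DecidableEq q]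

theorem nuclearNorm_le_nuclearNorm_fromCols_left (C : Matrix m p ℝ) (D : Matrix m q ℝ) :
    nuclearNorm C ≤ nuclearNorm (fromCols C D) := by
  simpa [fromCols_mul_fromRows] using
    nuclearNorm_mul_le_of_l2_opNorm_le_one (fromCols C D) l2_opNorm_fromRows_one_zero_le

theorem nuclearNorm_le_nuclearNorm_fromCols_right (C : Matrix m p ℝ) (D : Matrix m q ℝ) :
    nuclearNorm D ≤ nuclearNorm (fromCols C D) := by
  simpa [fromCols_mul_fromRows] using
    nuclearNorm_mul_le_of_l2_opNorm_le_one (fromCols C D) l2_opNorm_fromRows_zero_one_le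

theorem nuclearNorm_fromCols_le (C : Matrix m p ℝ) (D : Matrix m q ℝ) :
    nuclearNorm (fromCols C D) ≤ nuclearNorm C + nuclearNorm D := by
  set E₁ : Matrix (p ⊕ q) p ℝ := fromRows 1 0
  set E₂ : Matrix (p ⊕ q) q ℝ := fromRows 0 1
  have hsplit : fromCols C D = C * E₁ᴴ + D * E₂ᴴ := by
    simp only [E₁, E₂, conjTranspose_fromRows_eq_fromCols_conjTranspose, mul_fromCols]
    ext i (j | j) <;> simp
  have hE₁ : ‖E₁ᴴ‖ ≤ 1 := (l2_opNorm_conjTranspose E₁).trans_le l2_opNorm_fromRows_one_zero_le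
  have hE₂ : ‖E₂ᴴ‖ ≤ 1 := (l2_opNorm_conjTranspose E₂).trans_le l2_opNorm_fromRows_zero_one_le
  calc nuclearNorm (fromCols C D) ≤ nuclearNorm (C * E₁ᴴ) + nuclearNorm (D * E₂ᴴ) :=
        hsplit ▸ nuclearNorm_add_le _ _
    _ ≤ nuclearNorm C + nuclearNorm D :=
        add_le_add (nuclearNorm_mul_le_of_l2_opNorm_le_one C hE₁)
          (nuclearNorm_mul_le_of_l2_opNorm_le_one D hE₂)

end NuclearNorm

theorem abs_sub_div_le_min_div_max {a b x y : ℝ} (hx : max a b ≤ x) (hx' : x ≤ a + b)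
    (hy : max a b ≤ y) (hy' : y ≤ a + b) : |(x - y) / y| ≤ min a b / max a b := by
  have hmin_add_max : min a b + max a b = a + b := min_add_max a b
  have hmin_le_max : min a b ≤ max a b := min_le_max
  have hdiff : |x - y| ≤ min a b := abs_sub_le_iff.mpr ⟨by linarith, by linarith⟩
  rcases (show 0 ≤ y by linarith).eq_or_lt with rfl | hy_pos
  · have hmax : max a b = 0 := by linarith [abs_nonneg (x - 0)]
    simp [hmax]
  · have hmax : 0 < max a b := by linarith
    rw [abs_div, abs_of_pos hy_pos, div_le_div_iff₀ hy_pos hmax]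
    calc |x - y| * max a b ≤ min a b * max a b := by gcongr
      _ ≤ min a b * y := by gcongr; linarith [abs_nonneg (x - y)]

theorem nuclearNorm_perm_relative_error_bound_general {n mA mB : ℕ}
    (A : Matrix (Fin n) (Fin mA) ℝ) (B : Matrix (Fin n) (Fin mB) ℝ)
    (σ : Equiv.Perm (Fin n)) :
    -(min (nuclearNorm A) (nuclearNorm B) / max (nuclearNorm A) (nuclearNorm B)) ≤
        (nuclearNorm (fromCols A (B.submatrix σ id)) - nuclearNorm (fromCols A B)) /
          nuclearNorm (fromCols A B) ∧
      (nuclearNorm (fromCols A (B.submatrix σ id)) - nuclearNorm (fromCols A B)) /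
          nuclearNorm (fromCols A B) ≤
        min (nuclearNorm A) (nuclearNorm B) / max (nuclearNorm A) (nuclearNorm B) := by
  have bounds : ∀ C : Matrix (Fin n) (Fin mB) ℝ, nuclearNorm C = nuclearNorm B →
      max (nuclearNorm A) (nuclearNorm B) ≤ nuclearNorm (fromCols A C) ∧
        nuclearNorm (fromCols A C) ≤ nuclearNorm A + nuclearNorm B := fun C hC =>
    ⟨hC ▸ max_le (nuclearNorm_le_nuclearNorm_fromCols_left A C)
        (nuclearNorm_le_nuclearNorm_fromCols_right A C),
      hC ▸ nuclearNorm_fromCols_le A C⟩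
  obtain ⟨hPB_lower, hPB_upper⟩ := bounds _ (nuclearNorm_submatrix_equiv_left B σ)
  obtain ⟨hB_lower, hB_upper⟩ := bounds B rfl
  exact abs_le.mp (abs_sub_div_le_min_div_max hPB_lower hPB_upper hB_lower hB_upper)

/-- For `A ∈ ℝ^{n×m_A}`, `B ∈ ℝ^{n×m_B}` and any permutation matrix `P`,
`−Z/N ≤ (‖[A,PB]‖_* − ‖[A,B]‖_*)/‖[A,B]‖_* ≤ Z/N` where `N = max{‖A‖_*, ‖B‖_*}`
and `Z = min{‖A‖_*, ‖B‖_*}`. -/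
theorem nuclearNorm_perm_relative_error_bound {n mA mB : ℕ}
    (A : Matrix (Fin n) (Fin mA) ℝ) (B : Matrix (Fin n) (Fin mB) ℝ)
    (σ : Equiv.Perm (Fin n)) (hAB : fromCols A B ≠ 0) :
    -(min (nuclearNorm A) (nuclearNorm B) / max (nuclearNorm A) (nuclearNorm B)) ≤
        (nuclearNorm (fromCols A (B.submatrix σ id)) - nuclearNorm (fromCols A B)) /
          nuclearNorm (fromCols A B) ∧
      (nuclearNorm (fromCols A (B.submatrix σ id)) - nuclearNorm (fromCols A B)) /
          nuclearNorm (fromCols A B) ≤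
        min (nuclearNorm A) (nuclearNorm B) / max (nuclearNorm A) (nuclearNorm B) :=
  nuclearNorm_perm_relative_error_bound_general A B σ
end

section
/- Let A = U_A Σ_A V_A^T and B = U_B Σ_B V_B^T be (compact) singular value decompositions, and let P be an n×n permutation matrix. Then ‖A‖_* + ‖B‖_* ≥ ‖[A, P B]‖_* ≥ (‖A‖_* + ‖B‖_*)/‖[U_A V_A^T, P U_B V_B^T]‖ ≥ (‖A‖_* + ‖B‖_*)/√2, where ‖·‖ is the spectral norm and ‖·‖_* the nuclear norm. -/
open Matrix

/-- The spectral (operator) norm of a real matrix: its largest singular value. -/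
noncomputable def matSpectralNorm {m n : Type*} [Fintype m] [Fintype n] [DecidableEq n]
    (A : Matrix m n ℝ) : ℝ :=
  Real.sqrt (⨆ i, (Matrix.isHermitian_conjTranspose_mul_self A).eigenvalues i)

/-!
The nuclear norm is dual to the spectral norm: `tr (Wᵀ M) ≤ ‖W‖ ‖M‖_*` for every `W`, with
equality for the polar factor of `M`, which is a contraction. Splitting the polar factor of
`[A, PB]` into its two column blocks, both contractions, gives the first inequality. For
`W = [U_A V_Aᵀ, P U_B V_Bᵀ]` one computes `tr (Wᵀ [A, PB]) = tr Σ_A + tr Σ_B = ‖A‖_* + ‖B‖_*`,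
which gives the second; and `‖W‖ ≤ √2` since both blocks of `W` are contractions and
`‖x + y‖² ≤ 2‖x‖² + 2‖y‖²`.
-/

section Algebra

variable {R k k' a b : Type*} [CommSemiring R] [Fintype k]

lemma trace_transpose_mul_eq_sum_dotProduct [Fintype a] (X Y : Matrix k a R) :
    trace (Xᵀ * Y) = ∑ j, X.col j ⬝ᵥ Y.col j := by
  simp [trace, mul_apply, dotProduct]

lemma trace_transpose_fromCols_mul_fromCols [Fintype a] [Fintype b] (W Z : Matrix k a R)
    (X T : Matrix k b R) :
    trace ((fromCols W X)ᵀ * fromCols Z T) = trace (Wᵀ * Z) + trace (Xᵀ * T) := by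
  simp [transpose_fromCols, trace, Fintype.sum_sum_type]

lemma transpose_submatrix_mul_submatrix [Fintype k'] (X Y : Matrix k a R) (e : k' ≃ k) :
    (X.submatrix e id)ᵀ * Y.submatrix e id = Xᵀ * Y := by
  rw [transpose_submatrix, ← submatrix_mul _ _ _ _ _ e.bijective, submatrix_id_id]

end Algebra

section DotProduct

variable {k l : Type*} [Fintype k] [Fintype l]

lemma dotProduct_le_sqrt_mul_sqrt (u v : l → ℝ) : u ⬝ᵥ v ≤ √(u ⬝ᵥ u) * √(v ⬝ᵥ v) := by
  simpa only [dotProduct, pow_two] using Real.sum_mul_le_sqrt_mul_sqrt Finset.univ u v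

lemma dotProduct_self_nonneg (v : l → ℝ) : 0 ≤ v ⬝ᵥ v :=
  Finset.sum_nonneg fun i _ => mul_self_nonneg (v i)

lemma dotProduct_add_self_le (u v : l → ℝ) :
    (u + v) ⬝ᵥ (u + v) ≤ 2 * (u ⬝ᵥ u) + 2 * (v ⬝ᵥ v) := by
  simp only [dotProduct, Pi.add_apply, Finset.mul_sum, ← Finset.sum_add_distrib]
  exact Finset.sum_le_sum fun i _ => by nlinarith [sq_nonneg (u i - v i)]

lemma dotProduct_mulVec_self (M : Matrix k l ℝ) (x : l → ℝ) :
    (M *ᵥ x) ⬝ᵥ (M *ᵥ x) = x ⬝ᵥ (Mᵀ * M) *ᵥ x := by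
  rw [← mulVec_mulVec, dotProduct_mulVec x, vecMul_transpose]

variable [DecidableEq l]

lemma dotProduct_mulVec_self_of_transpose_mul_eq_one {U : Matrix k l ℝ} (hU : Uᵀ * U = 1)
    (x : l → ℝ) : (U *ᵥ x) ⬝ᵥ (U *ᵥ x) = x ⬝ᵥ x := by
  rw [dotProduct_mulVec_self, hU, one_mulVec]

lemma dotProduct_col_self_of_transpose_mul_eq_one {U : Matrix k l ℝ} (hU : Uᵀ * U = 1) (j : l) :
    U.col j ⬝ᵥ U.col j = 1 := by
  rw [← mulVec_single_one, dotProduct_mulVec_self_of_transpose_mul_eq_one hU]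
  simp

lemma dotProduct_transpose_mulVec_self_le {V : Matrix k l ℝ} (hV : Vᵀ * V = 1) (y : k → ℝ) :
    (Vᵀ *ᵥ y) ⬝ᵥ (Vᵀ *ᵥ y) ≤ y ⬝ᵥ y := by
  have hproj : y ⬝ᵥ V *ᵥ (Vᵀ *ᵥ y) = (Vᵀ *ᵥ y) ⬝ᵥ (Vᵀ *ᵥ y) := by
    rw [dotProduct_mulVec, ← mulVec_transpose]
  have hsq := dotProduct_self_nonneg (y - V *ᵥ (Vᵀ *ᵥ y))
  simp only [dotProduct_sub, sub_dotProduct, dotProduct_comm _ y, hproj,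
    dotProduct_mulVec_self_of_transpose_mul_eq_one hV] at hsq
  linarith

end DotProduct

section Gram

variable {k l : Type*} [Fintype k] [Fintype l] [DecidableEq l] (M : Matrix k l ℝ)

noncomputable def gramEigenvalues : l → ℝ :=
  (isHermitian_conjTranspose_mul_self M).eigenvalues

noncomputable def gramEigenvectors : Matrix l l ℝ :=
  ((isHermitian_conjTranspose_mul_self M).eigenvectorUnitary : Matrix l l ℝ)

lemma gramEigenvalues_nonneg (i : l) : 0 ≤ gramEigenvalues M i :=
  eigenvalues_conjTranspose_mul_self_nonneg M i

lemma nuclearNorm_eq_sum_sqrt_gramEigenvalues :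
    nuclearNorm M = ∑ i, √(gramEigenvalues M i) := rfl

lemma matSpectralNorm_eq_sqrt_iSup_gramEigenvalues :
    matSpectralNorm M = √(⨆ i, gramEigenvalues M i) := rfl

lemma gramEigenvectors_transpose_mul_self : (gramEigenvectors M)ᵀ * gramEigenvectors M = 1 := by
  simpa [gramEigenvectors, star_eq_conjTranspose] using
    Unitary.coe_star_mul_self (isHermitian_conjTranspose_mul_self M).eigenvectorUnitary

lemma gramEigenvectors_mul_transpose_self : gramEigenvectors M * (gramEigenvectors M)ᵀ = 1 :=
  mul_eq_one_comm.mp (gramEigenvectors_transpose_mul_self M)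

lemma transpose_mul_self_eq_gramEigenvectors_mul_diagonal :
    Mᵀ * M = gramEigenvectors M * diagonal (gramEigenvalues M) * (gramEigenvectors M)ᵀ := by
  simpa [gramEigenvectors, gramEigenvalues, Unitary.conjStarAlgAut_apply, star_eq_conjTranspose,
    RCLike.ofReal_real_eq_id] using (isHermitian_conjTranspose_mul_self M).spectral_theorem

lemma dotProduct_mulVec_self_eq_sum_gramEigenvalues (x : l → ℝ) :
    (M *ᵥ x) ⬝ᵥ (M *ᵥ x) = ∑ i, gramEigenvalues M i * ((gramEigenvectors M)ᵀ *ᵥ x) i ^ 2 := by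
  rw [dotProduct_mulVec_self, transpose_mul_self_eq_gramEigenvectors_mul_diagonal,
    ← mulVec_mulVec, ← mulVec_mulVec, dotProduct_mulVec x, ← mulVec_transpose]
  simp only [dotProduct, mulVec_diagonal]
  exact Finset.sum_congr rfl fun i _ => by ring

lemma dotProduct_self_eq_sum_sq_gramEigenvectors (x : l → ℝ) :
    x ⬝ᵥ x = ∑ i, ((gramEigenvectors M)ᵀ *ᵥ x) i ^ 2 := by
  rw [← dotProduct_mulVec_self_of_transpose_mul_eq_one (U := (gramEigenvectors M)ᵀ)
    (by rw [transpose_transpose, gramEigenvectors_mul_transpose_self])]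
  simp only [dotProduct, pow_two]

lemma transpose_mulVec_gramEigenvector (j : l) :
    (gramEigenvectors M)ᵀ *ᵥ ((gramEigenvectors M).col j) = Pi.single j 1 := by
  rw [← mulVec_single_one, mulVec_mulVec, gramEigenvectors_transpose_mul_self, one_mulVec]

lemma dotProduct_mulVec_gramEigenvector_self (j : l) :
    (M *ᵥ ((gramEigenvectors M).col j)) ⬝ᵥ (M *ᵥ ((gramEigenvectors M).col j)) =
      gramEigenvalues M j := by
  rw [dotProduct_mulVec_self_eq_sum_gramEigenvalues, transpose_mulVec_gramEigenvector]
  simp [Pi.single_apply]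

lemma trace_transpose_mul_eq_sum_gramEigenvectors (W : Matrix k l ℝ) :
    trace (Wᵀ * M) = ∑ j, (W *ᵥ ((gramEigenvectors M).col j)) ⬝ᵥ
      (M *ᵥ ((gramEigenvectors M).col j)) := by
  have hconj : trace (Wᵀ * M) = trace ((W * gramEigenvectors M)ᵀ * (M * gramEigenvectors M)) := by
    rw [transpose_mul, Matrix.mul_assoc, trace_mul_comm (gramEigenvectors M)ᵀ, Matrix.mul_assoc,
      Matrix.mul_assoc, gramEigenvectors_mul_transpose_self, Matrix.mul_one]
  simp only [hconj, trace_transpose_mul_eq_sum_dotProduct, ← mulVec_single_one, mulVec_mulVec]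

end Gram

section Duality

variable {k l : Type*} [Fintype k] [Fintype l] [DecidableEq l]

lemma matSpectralNorm_nonneg (M : Matrix k l ℝ) : 0 ≤ matSpectralNorm M := Real.sqrt_nonneg _

lemma nuclearNorm_nonneg (M : Matrix k l ℝ) : 0 ≤ nuclearNorm M :=
  Finset.sum_nonneg fun _ _ => Real.sqrt_nonneg _

lemma dotProduct_mulVec_self_le (M : Matrix k l ℝ) (x : l → ℝ) :
    (M *ᵥ x) ⬝ᵥ (M *ᵥ x) ≤ matSpectralNorm M ^ 2 * (x ⬝ᵥ x) := by
  rw [matSpectralNorm_eq_sqrt_iSup_gramEigenvalues,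
    Real.sq_sqrt (Real.iSup_nonneg (gramEigenvalues_nonneg M)),
    dotProduct_mulVec_self_eq_sum_gramEigenvalues, dotProduct_self_eq_sum_sq_gramEigenvectors M,
    Finset.mul_sum]
  exact Finset.sum_le_sum fun i _ => mul_le_mul_of_nonneg_right
    (le_ciSup (Set.finite_range _).bddAbove i) (sq_nonneg _)

lemma dotProduct_mulVec_self_le_of_matSpectralNorm_le {M : Matrix k l ℝ} {c : ℝ}
    (hM : matSpectralNorm M ≤ c) (x : l → ℝ) : (M *ᵥ x) ⬝ᵥ (M *ᵥ x) ≤ c ^ 2 * (x ⬝ᵥ x) :=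
  (dotProduct_mulVec_self_le M x).trans <| mul_le_mul_of_nonneg_right
    (pow_le_pow_left₀ (matSpectralNorm_nonneg M) hM 2) (dotProduct_self_nonneg x)

lemma matSpectralNorm_le_bound {M : Matrix k l ℝ} {c : ℝ} (hc : 0 ≤ c)
    (hM : ∀ x, (M *ᵥ x) ⬝ᵥ (M *ᵥ x) ≤ c ^ 2 * (x ⬝ᵥ x)) : matSpectralNorm M ≤ c := by
  rw [matSpectralNorm_eq_sqrt_iSup_gramEigenvalues, Real.sqrt_le_left hc]
  refine Real.iSup_le (fun j => ?_) (sq_nonneg c)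
  have hunit := dotProduct_col_self_of_transpose_mul_eq_one (gramEigenvectors_transpose_mul_self M)
  simpa [dotProduct_mulVec_gramEigenvector_self, hunit] using hM ((gramEigenvectors M).col j)

lemma dotProduct_mulVec_le (u : k → ℝ) (P : Matrix k l ℝ) (v : l → ℝ) :
    u ⬝ᵥ P *ᵥ v ≤ √(u ⬝ᵥ u) * (matSpectralNorm P * √(v ⬝ᵥ v)) := by
  calc u ⬝ᵥ P *ᵥ v ≤ √(u ⬝ᵥ u) * √((P *ᵥ v) ⬝ᵥ (P *ᵥ v)) := dotProduct_le_sqrt_mul_sqrt _ _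
    _ ≤ √(u ⬝ᵥ u) * √(matSpectralNorm P ^ 2 * (v ⬝ᵥ v)) := by
      gcongr; exact dotProduct_mulVec_self_le P v
    _ = √(u ⬝ᵥ u) * (matSpectralNorm P * √(v ⬝ᵥ v)) := by
      rw [Real.sqrt_mul (sq_nonneg _), Real.sqrt_sq (matSpectralNorm_nonneg P)]

lemma trace_transpose_mul_le (W M : Matrix k l ℝ) :
    trace (Wᵀ * M) ≤ matSpectralNorm W * nuclearNorm M := by
  rw [trace_transpose_mul_eq_sum_gramEigenvectors, nuclearNorm_eq_sum_sqrt_gramEigenvalues,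
    Finset.mul_sum]
  refine Finset.sum_le_sum fun j _ => ?_
  rw [dotProduct_comm]
  have hunit := dotProduct_col_self_of_transpose_mul_eq_one (gramEigenvectors_transpose_mul_self M)
  simpa [dotProduct_mulVec_gramEigenvector_self, hunit, mul_comm] using
    dotProduct_mulVec_le (M *ᵥ (gramEigenvectors M).col j) W ((gramEigenvectors M).col j)

lemma trace_transpose_mul_le_nuclearNorm {W : Matrix k l ℝ} (hW : matSpectralNorm W ≤ 1)
    (M : Matrix k l ℝ) : trace (Wᵀ * M) ≤ nuclearNorm M :=
  (trace_transpose_mul_le W M).trans (mul_le_of_le_one_left (nuclearNorm_nonneg M) hW)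

/-- The witness is the polar factor `M (MᵀM)^{-1/2}`, extended by zero on the kernel of `M`. -/
lemma exists_trace_transpose_mul_eq_nuclearNorm (M : Matrix k l ℝ) :
    ∃ P : Matrix k l ℝ, matSpectralNorm P ≤ 1 ∧ trace (Pᵀ * M) = nuclearNorm M := by
  -- `(√0)⁻¹ = 0`, so `g` inverts the nonzero singular values and vanishes on the others.
  set g : l → ℝ := fun i => (√(gramEigenvalues M i))⁻¹
  refine ⟨M * gramEigenvectors M * diagonal g * (gramEigenvectors M)ᵀ,
    matSpectralNorm_le_bound zero_le_one fun x => ?_, ?_⟩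
  · rw [← mulVec_mulVec, ← mulVec_mulVec, ← mulVec_mulVec,
      dotProduct_mulVec_self_eq_sum_gramEigenvalues, mulVec_mulVec _ (gramEigenvectors M)ᵀ,
      gramEigenvectors_transpose_mul_self, one_mulVec, dotProduct_self_eq_sum_sq_gramEigenvectors M,
      one_pow, one_mul]
    refine Finset.sum_le_sum fun i _ => ?_
    rw [mulVec_diagonal, mul_pow, ← mul_assoc, inv_pow, Real.sq_sqrt (gramEigenvalues_nonneg M i)]
    exact mul_le_of_le_one_left (sq_nonneg _) mul_inv_le_one
  · rw [trace_transpose_mul_eq_sum_gramEigenvectors, nuclearNorm_eq_sum_sqrt_gramEigenvalues]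
    refine Finset.sum_congr rfl fun j _ => ?_
    have hcol : (M * gramEigenvectors M * diagonal g * (gramEigenvectors M)ᵀ) *ᵥ
        (gramEigenvectors M).col j = g j • (M *ᵥ (gramEigenvectors M).col j) := by
      rw [← mulVec_mulVec, transpose_mulVec_gramEigenvector, ← mulVec_mulVec, ← mulVec_mulVec,
        diagonal_mulVec_single, mul_one]
      simp [mulVec_smul]
    rw [hcol, smul_dotProduct, dotProduct_mulVec_gramEigenvector_self, smul_eq_mul,
      inv_mul_eq_div, Real.div_sqrt]

end Duality

section Blocks

variable {k a b : Type*} [Fintype k] [Fintype a] [Fintype b] [DecidableEq a] [DecidableEq b]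

lemma matSpectralNorm_toCols₁_le (P : Matrix k (a ⊕ b) ℝ) :
    matSpectralNorm P.toCols₁ ≤ matSpectralNorm P := by
  refine matSpectralNorm_le_bound (matSpectralNorm_nonneg P) fun z => ?_
  have hz : P.toCols₁ *ᵥ z = P *ᵥ Sum.elim z 0 := by
    conv_rhs => rw [← fromCols_toCols P, fromCols_mulVec_sumElim, mulVec_zero, add_zero]
  simpa [hz] using dotProduct_mulVec_self_le P (Sum.elim z 0)

lemma matSpectralNorm_toCols₂_le (P : Matrix k (a ⊕ b) ℝ) :
    matSpectralNorm P.toCols₂ ≤ matSpectralNorm P := by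
  refine matSpectralNorm_le_bound (matSpectralNorm_nonneg P) fun z => ?_
  have hz : P.toCols₂ *ᵥ z = P *ᵥ Sum.elim 0 z := by
    conv_rhs => rw [← fromCols_toCols P, fromCols_mulVec_sumElim, mulVec_zero, zero_add]
  simpa [hz] using dotProduct_mulVec_self_le P (Sum.elim 0 z)

lemma nuclearNorm_fromCols_le_s8 (X : Matrix k a ℝ) (Y : Matrix k b ℝ) :
    nuclearNorm (fromCols X Y) ≤ nuclearNorm X + nuclearNorm Y := by
  obtain ⟨P, hP, hPM⟩ := exists_trace_transpose_mul_eq_nuclearNorm (fromCols X Y)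
  rw [← hPM, ← fromCols_toCols P, trace_transpose_fromCols_mul_fromCols]
  exact add_le_add
    (trace_transpose_mul_le_nuclearNorm ((matSpectralNorm_toCols₁_le P).trans hP) X)
    (trace_transpose_mul_le_nuclearNorm ((matSpectralNorm_toCols₂_le P).trans hP) Y)

lemma matSpectralNorm_fromCols_le {X : Matrix k a ℝ} {Y : Matrix k b ℝ} {c : ℝ}
    (hX : matSpectralNorm X ≤ c) (hY : matSpectralNorm Y ≤ c) :
    matSpectralNorm (fromCols X Y) ≤ √2 * c := by
  have hc : 0 ≤ c := (matSpectralNorm_nonneg X).trans hX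
  refine matSpectralNorm_le_bound (by positivity) fun x => ?_
  have hsplit : x ⬝ᵥ x = (x ∘ Sum.inl) ⬝ᵥ (x ∘ Sum.inl) + (x ∘ Sum.inr) ⬝ᵥ (x ∘ Sum.inr) := by
    simp [dotProduct, Fintype.sum_sum_type]
  rw [fromCols_mulVec, mul_pow, Real.sq_sqrt zero_le_two, hsplit]
  linarith [dotProduct_add_self_le (X *ᵥ (x ∘ Sum.inl)) (Y *ᵥ (x ∘ Sum.inr)),
    dotProduct_mulVec_self_le_of_matSpectralNorm_le hX (x ∘ Sum.inl),
    dotProduct_mulVec_self_le_of_matSpectralNorm_le hY (x ∘ Sum.inr)]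

end Blocks

section RowReindex

variable {k k' l : Type*} [Fintype k] [Fintype k'] [Fintype l] [DecidableEq l]

lemma gramEigenvalues_submatrix (M : Matrix k l ℝ) (e : k' ≃ k) :
    gramEigenvalues (M.submatrix e id) = gramEigenvalues M := by
  have hgram : (M.submatrix e id)ᴴ * M.submatrix e id = Mᴴ * M := by
    simp only [conjTranspose_eq_transpose_of_trivial, transpose_submatrix_mul_submatrix]
  unfold gramEigenvalues
  congr 1

lemma nuclearNorm_submatrix (M : Matrix k l ℝ) (e : k' ≃ k) :
    nuclearNorm (M.submatrix e id) = nuclearNorm M := by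
  simp only [nuclearNorm_eq_sum_sqrt_gramEigenvalues, gramEigenvalues_submatrix]

lemma matSpectralNorm_submatrix (M : Matrix k l ℝ) (e : k' ≃ k) :
    matSpectralNorm (M.submatrix e id) = matSpectralNorm M := by
  simp only [matSpectralNorm_eq_sqrt_iSup_gramEigenvalues, gramEigenvalues_submatrix]

end RowReindex

section SVD

variable {k l r : Type*} [Fintype k] [Fintype l] [Fintype r] [DecidableEq r]
  {U : Matrix k r ℝ} {V : Matrix l r ℝ}

lemma trace_transpose_mul_svd_eq_sum (hU : Uᵀ * U = 1) (hV : Vᵀ * V = 1) (d : r → ℝ) :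
    trace ((U * Vᵀ)ᵀ * (U * diagonal d * Vᵀ)) = ∑ i, d i := by
  rw [transpose_mul, transpose_transpose, Matrix.mul_assoc, ← Matrix.mul_assoc Uᵀ,
    ← Matrix.mul_assoc Uᵀ, hU, Matrix.one_mul, trace_mul_comm, Matrix.mul_assoc, hV,
    Matrix.mul_one, trace_diagonal]

variable [DecidableEq l]

lemma matSpectralNorm_mul_transpose_le_one (hU : Uᵀ * U = 1) (hV : Vᵀ * V = 1) :
    matSpectralNorm (U * Vᵀ) ≤ 1 :=
  matSpectralNorm_le_bound zero_le_one fun x => by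
    rw [← mulVec_mulVec, dotProduct_mulVec_self_of_transpose_mul_eq_one hU, one_pow, one_mul]
    exact dotProduct_transpose_mulVec_self_le hV x

lemma trace_transpose_mul_svd_le_sum (hU : Uᵀ * U = 1) (hV : Vᵀ * V = 1) {d : r → ℝ}
    (hd : ∀ i, 0 ≤ d i) {P : Matrix k l ℝ} (hP : matSpectralNorm P ≤ 1) :
    trace (Pᵀ * (U * diagonal d * Vᵀ)) ≤ ∑ i, d i := by
  have hcyc : trace (Pᵀ * (U * diagonal d * Vᵀ)) = trace ((P * V)ᵀ * (U * diagonal d)) := by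
    rw [← Matrix.mul_assoc, trace_mul_comm, transpose_mul, Matrix.mul_assoc]
  rw [hcyc, trace_transpose_mul_eq_sum_dotProduct]
  refine Finset.sum_le_sum fun i _ => ?_
  have hcol : (U * diagonal d).col i = d i • U.col i := by
    ext; simp [col, mul_comm]
  have hcs := dotProduct_mulVec_le (U.col i) P (V.col i)
  rw [dotProduct_col_self_of_transpose_mul_eq_one hU,
    dotProduct_col_self_of_transpose_mul_eq_one hV, Real.sqrt_one, one_mul, mul_one] at hcs
  rw [hcol, dotProduct_smul, smul_eq_mul, ← mulVec_single_one, ← mulVec_mulVec, mulVec_single_one,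
    dotProduct_comm]
  exact mul_le_of_le_one_right (hd i) (hcs.trans hP)

lemma nuclearNorm_svd (hU : Uᵀ * U = 1) (hV : Vᵀ * V = 1) {d : r → ℝ} (hd : ∀ i, 0 ≤ d i) :
    nuclearNorm (U * diagonal d * Vᵀ) = ∑ i, d i := by
  obtain ⟨P, hP, hPM⟩ := exists_trace_transpose_mul_eq_nuclearNorm (U * diagonal d * Vᵀ)
  refine le_antisymm ?_ ?_
  · exact hPM ▸ trace_transpose_mul_svd_le_sum hU hV hd hP
  · calc ∑ i, d i = trace ((U * Vᵀ)ᵀ * (U * diagonal d * Vᵀ)) :=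
          (trace_transpose_mul_svd_eq_sum hU hV d).symm
      _ ≤ nuclearNorm (U * diagonal d * Vᵀ) :=
          trace_transpose_mul_le_nuclearNorm (matSpectralNorm_mul_transpose_le_one hU hV) _

end SVD

/-- If `A = U_A Σ_A V_Aᵀ` and `B = U_B Σ_B V_Bᵀ` are compact SVDs and `P` is a
permutation matrix, then
`‖A‖_* + ‖B‖_* ≥ ‖[A, PB]‖_* ≥ (‖A‖_* + ‖B‖_*)/‖[U_A V_Aᵀ, P U_B V_Bᵀ]‖ ≥ (‖A‖_* + ‖B‖_*)/√2`. -/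
theorem nuclearNorm_perm_concat_bounds {n mA mB rA rB : ℕ}
    (A : Matrix (Fin n) (Fin mA) ℝ) (B : Matrix (Fin n) (Fin mB) ℝ)
    (UA : Matrix (Fin n) (Fin rA) ℝ) (SA : Matrix (Fin rA) (Fin rA) ℝ)
    (VA : Matrix (Fin mA) (Fin rA) ℝ)
    (UB : Matrix (Fin n) (Fin rB) ℝ) (SB : Matrix (Fin rB) (Fin rB) ℝ)
    (VB : Matrix (Fin mB) (Fin rB) ℝ)
    (hUA : UAᵀ * UA = 1) (hVA : VAᵀ * VA = 1)
    (hSAd : ∀ i j, i ≠ j → SA i j = 0) (hSAp : ∀ i, 0 < SA i i)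
    (hA : A = UA * SA * VAᵀ)
    (hUB : UBᵀ * UB = 1) (hVB : VBᵀ * VB = 1)
    (hSBd : ∀ i j, i ≠ j → SB i j = 0) (hSBp : ∀ i, 0 < SB i i)
    (hB : B = UB * SB * VBᵀ)
    (σ : Equiv.Perm (Fin n)) :
    nuclearNorm A + nuclearNorm B ≥ nuclearNorm (fromCols A (B.submatrix σ id)) ∧
      nuclearNorm (fromCols A (B.submatrix σ id)) ≥
        (nuclearNorm A + nuclearNorm B) /
          matSpectralNorm (fromCols (UA * VAᵀ) ((UB * VBᵀ).submatrix σ id)) ∧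
      (nuclearNorm A + nuclearNorm B) /
          matSpectralNorm (fromCols (UA * VAᵀ) ((UB * VBᵀ).submatrix σ id)) ≥
        (nuclearNorm A + nuclearNorm B) / Real.sqrt 2 := by
  obtain ⟨dA, rfl⟩ : ∃ d, SA = diagonal d :=
    ⟨SA.diag, (show SA.IsDiag from fun i j h => hSAd i j h).diagonal_diag.symm⟩
  obtain ⟨dB, rfl⟩ : ∃ d, SB = diagonal d :=
    ⟨SB.diag, (show SB.IsDiag from fun i j h => hSBd i j h).diagonal_diag.symm⟩
  have hnA : nuclearNorm A = ∑ i, dA i :=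
    hA ▸ nuclearNorm_svd hUA hVA fun i => by simpa using (hSAp i).le
  have hnB : nuclearNorm B = ∑ i, dB i :=
    hB ▸ nuclearNorm_svd hUB hVB fun i => by simpa using (hSBp i).le
  set M := fromCols A (B.submatrix σ id)
  set W := fromCols (UA * VAᵀ) ((UB * VBᵀ).submatrix σ id)
  have hWM : trace (Wᵀ * M) = nuclearNorm A + nuclearNorm B := by
    rw [trace_transpose_fromCols_mul_fromCols, transpose_submatrix_mul_submatrix, hnA, hnB, hA, hB,
      trace_transpose_mul_svd_eq_sum hUA hVA, trace_transpose_mul_svd_eq_sum hUB hVB]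
  have hW : matSpectralNorm W ≤ √2 := by
    simpa using matSpectralNorm_fromCols_le (matSpectralNorm_mul_transpose_le_one hUA hVA)
      ((matSpectralNorm_submatrix _ σ).trans_le (matSpectralNorm_mul_transpose_le_one hUB hVB))
  have hduality : nuclearNorm A + nuclearNorm B ≤ matSpectralNorm W * nuclearNorm M :=
    hWM ▸ trace_transpose_mul_le W M
  have hsum_nonneg := add_nonneg (nuclearNorm_nonneg A) (nuclearNorm_nonneg B)
  refine ⟨?_, ?_, ?_⟩
  · calc nuclearNorm M ≤ nuclearNorm A + nuclearNorm (B.submatrix σ id) :=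
          nuclearNorm_fromCols_le_s8 _ _
      _ = nuclearNorm A + nuclearNorm B := by rw [nuclearNorm_submatrix]
  · exact div_le_of_le_mul₀ (matSpectralNorm_nonneg W) (nuclearNorm_nonneg M)
      (by rwa [mul_comm])
  · rcases (matSpectralNorm_nonneg W).eq_or_lt with hW0 | hWpos
    · have hsum : nuclearNorm A + nuclearNorm B = 0 :=
        le_antisymm (by simpa [← hW0] using hduality) hsum_nonneg
      simp [hsum]
    · exact div_le_div_of_nonneg_left hsum_nonneg hWpos hW
end

section
/- Let u = (1, 2, ..., j, 0, ..., 0)^T ∈ ℝ^n and let P_* be the permutation matrix of the cycle (1 2 ... j). If j ≥ 2r, then the matrix [u, P_* u, P_*² u, ..., P_*^{2r−1} u] ∈ ℝ^{n×2r} has rank 2r. -/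
open Matrix

/-!
On the first `j` coordinates, column `k` is the cyclic shift `i ↦ ((i + k) mod j) + 1` of the
ramp `(1, …, j)`, so it suffices that all `j` cyclic shifts of the ramp are linearly independent.
If `∑ c_k · shift_k = 0`, subtracting consecutive rows leaves `∑ c - j · c_k` (exactly one entry
wraps around from `j` to `1`), so all `c_k` are equal; row `0` then reads `c · j (j + 1) / 2 = 0`.
-/

theorem Fin.linearIndependent_val_add_add_one (K : Type*) [Field K] [CharZero K] (j : ℕ) :
    LinearIndependent K (fun (k i : Fin j) => (((i + k : Fin j) : ℕ) : K) + 1) := by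
  cases j with
  | zero => exact linearIndependent_empty_type
  | succ m =>
  rw [Fintype.linearIndependent_iff]
  intro c hc
  have hrow (i : Fin (m + 1)) : ∑ k, c k * ((((i + k : Fin (m + 1)) : ℕ) : K) + 1) = 0 := by
    simpa using congrFun hc i
  have hstep (x : Fin (m + 1)) : (((x + 1 : Fin (m + 1)) : ℕ) : K) - ((x : ℕ) : K)
      = 1 - if x = Fin.last m then (m + 1 : K) else 0 := by
    rw [Fin.val_add_one]
    split_ifs with h
    · simp [h]
    · push_cast; ring
  have hsum (i : Fin (m + 1)) : ∑ k, c k = (m + 1) * c (Fin.last m - i) := by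
    have hterm (k : Fin (m + 1)) :
        c k * ((((i + 1 + k : Fin (m + 1)) : ℕ) : K) + 1)
          - c k * ((((i + k : Fin (m + 1)) : ℕ) : K) + 1)
          = c k - if k = Fin.last m - i then (m + 1) * c k else 0 := by
      rw [← mul_sub, add_sub_add_right_eq_sub, add_right_comm, hstep]
      simp only [eq_sub_iff_add_eq']
      split_ifs <;> ring
    have h : ∑ k, (c k * ((((i + 1 + k : Fin (m + 1)) : ℕ) : K) + 1)
        - c k * ((((i + k : Fin (m + 1)) : ℕ) : K) + 1)) = 0 := by
      rw [Finset.sum_sub_distrib, hrow, hrow, sub_zero]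
    simpa only [hterm, Finset.sum_sub_distrib, Finset.sum_ite_eq', Finset.mem_univ, if_true,
      sub_eq_zero] using h
  have hconst (k : Fin (m + 1)) : c k = c 0 := by
    have h := (hsum (Fin.last m - k)).symm.trans (hsum (Fin.last m))
    rwa [sub_sub_cancel, sub_self, mul_right_inj' (Nat.cast_add_one_ne_zero m)] at h
  have hramp : (∑ k : Fin (m + 1), (((k : ℕ) : K) + 1)) ≠ 0 := by
    have hpos : 0 < ∑ k : Fin (m + 1), ((k : ℕ) + 1) :=
      Finset.sum_pos (fun k _ => Nat.succ_pos k) Finset.univ_nonempty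
    exact_mod_cast hpos.ne'
  have h0 : c 0 * ∑ k : Fin (m + 1), (((k : ℕ) : K) + 1) = 0 := by
    simpa [hconst, Finset.mul_sum] using hrow 0
  intro k
  rw [hconst, (mul_eq_zero.mp h0).resolve_right hramp]

theorem Equiv.Perm.val_pow_apply_of_lt {n j : ℕ} (σ : Equiv.Perm (Fin n))
    (hσ : ∀ i : Fin n, (i : ℕ) < j → (σ i : ℕ) = ((i : ℕ) + 1) % j) (k : ℕ) (i : Fin n)
    (hi : (i : ℕ) < j) : ((σ ^ k) i : ℕ) = ((i : ℕ) + k) % j := by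
  induction k with
  | zero => exact (Nat.mod_eq_of_lt hi).symm
  | succ k ih =>
    rw [pow_succ', Equiv.Perm.mul_apply, hσ _ (ih ▸ Nat.mod_lt _ (by omega)), ih, Nat.mod_add_mod,
      Nat.add_assoc]

/-- Let `u = (1, 2, ..., j, 0, ..., 0)ᵀ ∈ ℝⁿ` and let `P_*` be the permutation matrix of
the cycle that shifts the first `j` coordinates cyclically.  If `j ≥ 2r`, then the matrix
`[u, P_* u, P_*² u, ..., P_*^{2r−1} u] ∈ ℝ^{n×2r}` has rank `2r`. -/
theorem rank_cyclic_shift_columns {n j r : ℕ} (hjn : j ≤ n) (hj2r : 2 * r ≤ j)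
    (σ : Equiv.Perm (Fin n))
    (hσ : ∀ i : Fin n, ((σ i : ℕ) = if (i : ℕ) < j then ((i : ℕ) + 1) % j else (i : ℕ)))
    (u : Fin n → ℝ) (hu : ∀ i : Fin n, u i = if (i : ℕ) < j then (i : ℕ) + 1 else 0) :
    (Matrix.of fun (i : Fin n) (k : Fin (2 * r)) => u ((σ ^ (k : ℕ)) i)).rank = 2 * r := by
  set M := Matrix.of fun (i : Fin n) (k : Fin (2 * r)) => u ((σ ^ (k : ℕ)) i)
  have hcycle : ∀ i : Fin n, (i : ℕ) < j → (σ i : ℕ) = ((i : ℕ) + 1) % j :=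
    fun i hi => by rw [hσ, if_pos hi]
  have htop : LinearMap.funLeft ℝ ℝ (Fin.castLE hjn) ∘ M.col =
      (fun (k i : Fin j) => (((i + k : Fin j) : ℕ) : ℝ) + 1) ∘ Fin.castLE hj2r := by
    ext k i
    have hval := σ.val_pow_apply_of_lt hcycle k (Fin.castLE hjn i) i.2
    have hlt : ((σ ^ (k : ℕ)) (Fin.castLE hjn i) : ℕ) < j := hval ▸ Nat.mod_lt _ i.pos
    simp only [Function.comp_apply, LinearMap.funLeft_apply, M, col_apply, of_apply]
    rw [hu, if_pos hlt, hval]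
    simp [Fin.val_add]
  have hcols : LinearIndependent ℝ M.col :=
    .of_comp _ (htop ▸ (Fin.linearIndependent_val_add_add_one ℝ j).comp _ (Fin.castLE_injective _))
  rw [← rank_transpose, hcols.rank_matrix, Fintype.card_fin]
end
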